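/- arXiv:2512.19196 — 2 statements merged into one kernel-verified Lean document; each statement's English description precedes it below -/
import Mathlib

section
/- Let Ω ⊆ ℝ^d and let p, p̂ : Ω → ℝ be C¹ densities satisfying p(x) ≥ ε and p̂(x) ≥ ε for all x ∈ Ω (with ε > 0), and suppose ‖∇ log p‖_∞ ≤ M. Then ‖∇ log p̂ − ∇ log p‖_{L²(Ω)} ≤ (1/ε)‖∇(p̂ − p)‖_{L²(Ω)} + (M/ε)‖p̂ − p‖_{L²(Ω)}. -/
/-!
Where `p, p̂ ≠ 0` one has `∇ log p̂ − ∇ log p = p̂⁻¹ ∇(p̂ − p) + ((p − p̂) / p̂) ∇ log p`,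
so `p, p̂ ≥ ε` and `‖∇ log p‖ ≤ M` give the pointwise bound
`‖∇ log p̂ − ∇ log p‖ ≤ ε⁻¹ ‖∇(p̂ − p)‖ + (M / ε) |p̂ − p|`.
Minkowski's inequality in `L²(Ω)` turns it into the claimed bound.
-/

open MeasureTheory Real InnerProductSpace
open scoped Gradient

section Gradient

variable {F : Type*} [NormedAddCommGroup F] [InnerProductSpace ℝ F] [CompleteSpace F]
  {f g : F → ℝ} {f' g' x : F}

theorem HasGradientAt.sub (hf : HasGradientAt f f' x) (hg : HasGradientAt g g' x) :
    HasGradientAt (fun y => f y - g y) (f' - g') x := by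
  rw [hasGradientAt_iff_hasFDerivAt, map_sub]
  exact HasFDerivAt.sub hf hg

theorem HasGradientAt.log (hf : HasGradientAt f f' x) (hx : f x ≠ 0) :
    HasGradientAt (fun y => Real.log (f y)) ((f x)⁻¹ • f') x := by
  rw [hasGradientAt_iff_hasFDerivAt, map_smul]
  exact HasFDerivAt.log hf hx

theorem measurable_gradient [MeasurableSpace F] [BorelSpace F] (f : F → ℝ) :
    Measurable (∇ f) :=
  (toDual ℝ F).symm.continuous.measurable.comp (measurable_fderiv ℝ f)

theorem norm_gradient_log_sub_le {p q : F → ℝ} (hp : DifferentiableAt ℝ p x)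
    (hq : DifferentiableAt ℝ q x) {ε M : ℝ} (hε : 0 < ε) (hpx : ε ≤ p x) (hqx : ε ≤ q x)
    (hM : ‖∇ (fun y => Real.log (p y)) x‖ ≤ M) :
    ‖∇ (fun y => Real.log (q y)) x - ∇ (fun y => Real.log (p y)) x‖
      ≤ 1 / ε * ‖∇ (fun y => q y - p y) x‖ + M / ε * ‖q x - p x‖ := by
  have hp0 : p x ≠ 0 := (hε.trans_le hpx).ne'
  have hq0 : q x ≠ 0 := (hε.trans_le hqx).ne'
  set s := ∇ (fun y => Real.log (p y)) x
  have hs : s = (p x)⁻¹ • ∇ p x := (hp.hasGradientAt.log hp0).gradient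
  have decomp : ∇ (fun y => Real.log (q y)) x - s
      = (q x)⁻¹ • ∇ (fun y => q y - p y) x + ((p x - q x) / q x) • s := by
    rw [(hq.hasGradientAt.log hq0).gradient, (hq.hasGradientAt.sub hp.hasGradientAt).gradient,
      hs, smul_smul]
    have hcoeff : (p x - q x) / q x * (p x)⁻¹ = (q x)⁻¹ - (p x)⁻¹ := by field_simp
    rw [hcoeff, sub_smul, smul_sub]
    abel
  have hq_inv : ‖(q x)⁻¹‖ ≤ 1 / ε := by
    rw [norm_inv, Real.norm_of_nonneg (hε.le.trans hqx), one_div]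
    exact inv_anti₀ hε hqx
  have hratio : ‖(p x - q x) / q x‖ ≤ ‖q x - p x‖ / ε := by
    rw [norm_div, norm_sub_rev, Real.norm_of_nonneg (hε.le.trans hqx)]
    exact div_le_div_of_nonneg_left (norm_nonneg _) hε hqx
  calc ‖∇ (fun y => Real.log (q y)) x - s‖
      ≤ ‖(q x)⁻¹‖ * ‖∇ (fun y => q y - p y) x‖ + ‖(p x - q x) / q x‖ * ‖s‖ := by
        rw [decomp, ← norm_smul, ← norm_smul]
        exact norm_add_le _ _
    _ ≤ 1 / ε * ‖∇ (fun y => q y - p y) x‖ + ‖q x - p x‖ / ε * M := by gcongr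
    _ = 1 / ε * ‖∇ (fun y => q y - p y) x‖ + M / ε * ‖q x - p x‖ := by ring

end Gradient

theorem eLpNorm_const_mul_norm {α E : Type*} [MeasurableSpace α] {μ : Measure α}
    [NormedAddCommGroup E] {c : ℝ} (hc : 0 ≤ c) (f : α → E) (p : ENNReal) :
    eLpNorm (fun x => c * ‖f x‖) p μ = ENNReal.ofReal c * eLpNorm f p μ := by
  rw [show (fun x => c * ‖f x‖) = c • fun x => ‖f x‖ from rfl, eLpNorm_const_smul, eLpNorm_norm,
    Real.enorm_of_nonneg hc]

theorem eLpNorm_le_add_of_ae_norm_le {α E F G : Type*} [MeasurableSpace α] {μ : Measure α}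
    [NormedAddCommGroup E] [NormedAddCommGroup F] [NormedAddCommGroup G]
    {f : α → E} {g : α → F} {h : α → G} {a b : ℝ} {p : ENNReal}
    (hg : AEStronglyMeasurable g μ) (hh : AEStronglyMeasurable h μ) (hp : 1 ≤ p)
    (hfgh : ∀ᵐ x ∂μ, ‖f x‖ ≤ a * ‖g x‖ + b * ‖h x‖) :
    eLpNorm f p μ ≤ ENNReal.ofReal a * eLpNorm g p μ + ENNReal.ofReal b * eLpNorm h p μ := by
  have hfgh_pos : ∀ᵐ x ∂μ, ‖f x‖ ≤ a.toNNReal * ‖g x‖ + b.toNNReal * ‖h x‖ :=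
    hfgh.mono fun x hx => hx.trans (by gcongr <;> exact Real.le_coe_toNNReal _)
  calc eLpNorm f p μ ≤ eLpNorm (fun x => a.toNNReal * ‖g x‖ + b.toNNReal * ‖h x‖) p μ :=
        eLpNorm_mono_ae_real hfgh_pos
    _ ≤ eLpNorm (fun x => a.toNNReal * ‖g x‖) p μ + eLpNorm (fun x => b.toNNReal * ‖h x‖) p μ :=
        eLpNorm_add_le (hg.norm.const_mul _) (hh.norm.const_mul _) hp
    _ = ENNReal.ofReal a * eLpNorm g p μ + ENNReal.ofReal b * eLpNorm h p μ := by
        rw [eLpNorm_const_mul_norm (NNReal.coe_nonneg _),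
          eLpNorm_const_mul_norm (NNReal.coe_nonneg _), ENNReal.ofReal_coe_nnreal,
          ENNReal.ofReal_coe_nnreal]
        rfl

theorem score_stability_general {d : ℕ} (Ω : Set (EuclideanSpace ℝ (Fin d)))
    (hΩ : MeasurableSet Ω)
    (p phat : EuclideanSpace ℝ (Fin d) → ℝ)
    (hp : ContDiff ℝ 1 p) (hphat : ContDiff ℝ 1 phat)
    (ε : ℝ) (hε : 0 < ε)
    (hp_lb : ∀ x ∈ Ω, ε ≤ p x) (hphat_lb : ∀ x ∈ Ω, ε ≤ phat x)
    (M : ℝ)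
    (hscore_bdd : ∀ x ∈ Ω, ‖gradient (fun y => Real.log (p y)) x‖ ≤ M) :
    eLpNorm (fun x => gradient (fun y => Real.log (phat y)) x
        - gradient (fun y => Real.log (p y)) x) 2 (volume.restrict Ω)
      ≤ ENNReal.ofReal (1 / ε) *
          eLpNorm (fun x => gradient (fun y => phat y - p y) x) 2 (volume.restrict Ω)
        + ENNReal.ofReal (M / ε) *
          eLpNorm (fun x => phat x - p x) 2 (volume.restrict Ω) := by
  refine eLpNorm_le_add_of_ae_norm_le (measurable_gradient _).aestronglyMeasurable
    (hphat.continuous.sub hp.continuous).aestronglyMeasurable one_le_two ?_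
  filter_upwards [ae_restrict_mem hΩ] with x hx
  exact norm_gradient_log_sub_le (hp.differentiable one_ne_zero x)
    (hphat.differentiable one_ne_zero x) hε (hp_lb x hx) (hphat_lb x hx) (hscore_bdd x hx)

/-- Stability of the score function: if `p, p̂ ≥ ε > 0` on `Ω` are `C¹` densities and
`‖∇ log p‖_∞ ≤ M`, then
`‖∇ log p̂ − ∇ log p‖_{L²(Ω)} ≤ (1/ε) ‖∇(p̂ − p)‖_{L²(Ω)} + (M/ε) ‖p̂ − p‖_{L²(Ω)}`. -/
theorem score_stability {d : ℕ} (Ω : Set (EuclideanSpace ℝ (Fin d)))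
    (hΩ : MeasurableSet Ω)
    (p phat : EuclideanSpace ℝ (Fin d) → ℝ)
    (hp : ContDiff ℝ 1 p) (hphat : ContDiff ℝ 1 phat)
    (ε : ℝ) (hε : 0 < ε)
    (hp_lb : ∀ x ∈ Ω, ε ≤ p x) (hphat_lb : ∀ x ∈ Ω, ε ≤ phat x)
    (M : ℝ) (hM : 0 < M)
    (hscore_bdd : ∀ x ∈ Ω, ‖gradient (fun y => Real.log (p y)) x‖ ≤ M) :
    eLpNorm (fun x => gradient (fun y => Real.log (phat y)) x
        - gradient (fun y => Real.log (p y)) x) 2 (volume.restrict Ω)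
      ≤ ENNReal.ofReal (1 / ε) *
          eLpNorm (fun x => gradient (fun y => phat y - p y) x) 2 (volume.restrict Ω)
        + ENNReal.ofReal (M / ε) *
          eLpNorm (fun x => phat x - p x) 2 (volume.restrict Ω) :=
  score_stability_general Ω hΩ p phat hp hphat ε hε hp_lb hphat_lb M hscore_bdd
end

section
/- For univariate Gaussian measures μ = N(m₁, s₁²) and ν = N(m₂, s₂²) with s₁, s₂ > 0, the squared 2-Wasserstein distance equals (m₁ − m₂)² + (s₁ − s₂)². -/
/-!
For any coupling `(X, Y)` of `μ` and `ν`,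
`E (X - Y)² = (E X - E Y)² + Var X + Var Y - 2 Cov(X, Y)`, and Cauchy–Schwarz
`Cov(X, Y) ≤ σ_X σ_Y` bounds this below by `(E X - E Y)² + (σ_X - σ_Y)²`. For Gaussians the
bound is attained by the comonotone coupling `(m₁ + s₁ Z, m₂ + s₂ Z)` with `Z ~ N(0, 1)`,
under which `X - Y ~ N(m₁ - m₂, (s₁ - s₂)²)`.
-/

open MeasureTheory ProbabilityTheory ENNReal NNReal

/-- The squared 2-Wasserstein distance on `ℝ`: infimum over couplings of the expected
squared distance. -/
noncomputable def W2sqReal (μ ν : Measure ℝ) : ℝ≥0∞ :=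
  ⨅ (π : Measure (ℝ × ℝ)) (_ : π.map Prod.fst = μ ∧ π.map Prod.snd = ν),
    ∫⁻ p, (‖p.1 - p.2‖₊ : ℝ≥0∞) ^ 2 ∂π

section Moments

variable {Ω : Type*} {mΩ : MeasurableSpace Ω} {μ : Measure Ω} {X Y : Ω → ℝ}

lemma covariance_sq_le_variance_mul_variance [IsFiniteMeasure μ] (hX : MemLp X 2 μ)
    (hY : MemLp Y 2 μ) : cov[X, Y; μ] ^ 2 ≤ Var[X; μ] * Var[Y; μ] := by
  have hquad : ∀ t : ℝ, 0 ≤ Var[X; μ] * (t * t) + (-2 * cov[X, Y; μ]) * t + Var[Y; μ] := by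
    intro t
    have h := variance_nonneg (t • X - Y) μ
    rw [variance_sub (hX.const_smul t) hY, variance_smul, covariance_smul_left] at h
    linarith
  have := discrim_le_zero hquad
  rw [discrim] at this
  linarith

lemma sq_sqrt_variance_sub_le_variance_sub [IsFiniteMeasure μ] (hX : MemLp X 2 μ)
    (hY : MemLp Y 2 μ) : (√Var[X; μ] - √Var[Y; μ]) ^ 2 ≤ Var[X - Y; μ] := by
  have hcov : cov[X, Y; μ] ≤ √Var[X; μ] * √Var[Y; μ] := by
    rw [← Real.sqrt_mul (variance_nonneg X μ)]
    exact Real.le_sqrt_of_sq_le (covariance_sq_le_variance_mul_variance hX hY)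
  rw [variance_sub hX hY, sub_sq, Real.sq_sqrt (variance_nonneg X μ),
    Real.sq_sqrt (variance_nonneg Y μ)]
  linarith

lemma sq_integral_sub_add_sq_sqrt_variance_sub_le_integral_sq [IsProbabilityMeasure μ]
    (hX : MemLp X 2 μ) (hY : MemLp Y 2 μ) :
    (μ[X] - μ[Y]) ^ 2 + (√Var[X; μ] - √Var[Y; μ]) ^ 2 ≤ ∫ ω, (X ω - Y ω) ^ 2 ∂μ := by
  have h := variance_eq_sub (hX.sub hY)
  simp only [Pi.pow_apply, Pi.sub_apply] at h
  rw [integral_sub (hX.integrable one_le_two) (hY.integrable one_le_two)] at h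
  have := sq_sqrt_variance_sub_le_variance_sub hX hY
  linarith

lemma lintegral_nnnorm_sq_eq_ofReal_integral (hX : MemLp X 2 μ) :
    ∫⁻ ω, (‖X ω‖₊ : ℝ≥0∞) ^ 2 ∂μ = ENNReal.ofReal (∫ ω, X ω ^ 2 ∂μ) := by
  rw [ofReal_integral_eq_lintegral_ofReal hX.integrable_sq (ae_of_all _ fun _ => sq_nonneg _)]
  congr 1 with ω
  rw [← enorm_eq_nnnorm, ← ofReal_norm, ← ENNReal.ofReal_pow (norm_nonneg _),
    Real.norm_eq_abs, sq_abs]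

end Moments

lemma ofReal_mean_sq_add_sqrt_variance_sq_le_W2sqReal {μ ν : Measure ℝ}
    [IsProbabilityMeasure μ] (hμ : MemLp id 2 μ) (hν : MemLp id 2 ν) :
    ENNReal.ofReal ((μ[id] - ν[id]) ^ 2 + (√Var[id; μ] - √Var[id; ν]) ^ 2) ≤ W2sqReal μ ν := by
  refine le_iInf₂ fun π ⟨hfst, hsnd⟩ => ?_
  subst hfst hsnd
  have : IsProbabilityMeasure π := Measure.isProbabilityMeasure_of_map Prod.fst
  have h1 : MemLp Prod.fst 2 π :=
    (memLp_map_measure_iff aestronglyMeasurable_id measurable_fst.aemeasurable).1 hμ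
  have h2 : MemLp Prod.snd 2 π :=
    (memLp_map_measure_iff aestronglyMeasurable_id measurable_snd.aemeasurable).1 hν
  rw [lintegral_nnnorm_sq_eq_ofReal_integral (X := fun p : ℝ × ℝ => p.1 - p.2) (h1.sub h2),
    integral_map measurable_fst.aemeasurable aestronglyMeasurable_id,
    integral_map measurable_snd.aemeasurable aestronglyMeasurable_id,
    variance_id_map measurable_fst.aemeasurable, variance_id_map measurable_snd.aemeasurable]
  exact ENNReal.ofReal_le_ofReal (sq_integral_sub_add_sq_sqrt_variance_sub_le_integral_sq h1 h2)

lemma gaussianReal_map_const_mul_add {m : ℝ} {v : ℝ≥0} (c y : ℝ) :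
    (gaussianReal m v).map (fun x => c * x + y)
      = gaussianReal (c * m + y) (.mk (c ^ 2) (sq_nonneg _) * v) := by
  rw [← gaussianReal_map_add_const, ← gaussianReal_map_const_mul,
    Measure.map_map (measurable_add_const y) (measurable_const_mul c)]
  rfl

lemma lintegral_nnnorm_sq_gaussianReal (m : ℝ) (v : ℝ≥0) :
    ∫⁻ x, (‖x‖₊ : ℝ≥0∞) ^ 2 ∂gaussianReal m v = ENNReal.ofReal (m ^ 2 + v) := by
  have h := variance_eq_sub (memLp_id_gaussianReal (μ := m) (v := v) 2)
  simp only [Pi.pow_apply, id] at h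
  rw [variance_id_gaussianReal, integral_id_gaussianReal] at h
  rw [lintegral_nnnorm_sq_eq_ofReal_integral (X := fun x => x) (memLp_id_gaussianReal 2)]
  congr 1
  linarith

lemma gaussianReal_map_sqrt_mul_add (m : ℝ) (v : ℝ≥0) :
    (gaussianReal 0 1).map (fun z => √v * z + m) = gaussianReal m v := by
  rw [gaussianReal_map_const_mul_add]
  congr 1
  · ring
  · ext; simp

lemma W2sqReal_gaussianReal_le (m₁ m₂ : ℝ) (v₁ v₂ : ℝ≥0) :
    W2sqReal (gaussianReal m₁ v₁) (gaussianReal m₂ v₂)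
      ≤ ENNReal.ofReal ((m₁ - m₂) ^ 2 + (√v₁ - √v₂) ^ 2) := by
  set s₁ : ℝ := √v₁
  set s₂ : ℝ := √v₂
  set T : ℝ → ℝ × ℝ := fun z => (s₁ * z + m₁, s₂ * z + m₂)
  have hT : Measurable T := by fun_prop
  refine iInf₂_le_of_le ((gaussianReal 0 1).map T) ⟨?_, ?_⟩ (le_of_eq ?_)
  · rw [Measure.map_map measurable_fst hT]
    exact gaussianReal_map_sqrt_mul_add m₁ v₁
  · rw [Measure.map_map measurable_snd hT]
    exact gaussianReal_map_sqrt_mul_add m₂ v₂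
  calc ∫⁻ p, (‖p.1 - p.2‖₊ : ℝ≥0∞) ^ 2 ∂(gaussianReal 0 1).map T
      = ∫⁻ x, (‖x‖₊ : ℝ≥0∞) ^ 2
          ∂(gaussianReal 0 1).map (fun z => (s₁ - s₂) * z + (m₁ - m₂)) := by
        rw [lintegral_map (by fun_prop) hT, lintegral_map (by fun_prop) (by fun_prop)]
        congr with z
        simp only [T]
        ring_nf
    _ = ENNReal.ofReal ((m₁ - m₂) ^ 2 + (s₁ - s₂) ^ 2) := by
        rw [gaussianReal_map_const_mul_add, lintegral_nnnorm_sq_gaussianReal]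
        simp

theorem W2sqReal_gaussianReal (m₁ m₂ : ℝ) (v₁ v₂ : ℝ≥0) :
    W2sqReal (gaussianReal m₁ v₁) (gaussianReal m₂ v₂)
      = ENNReal.ofReal ((m₁ - m₂) ^ 2 + (√v₁ - √v₂) ^ 2) := by
  refine le_antisymm (W2sqReal_gaussianReal_le m₁ m₂ v₁ v₂) ?_
  simpa [integral_id_gaussianReal, variance_id_gaussianReal] using
    ofReal_mean_sq_add_sqrt_variance_sq_le_W2sqReal (memLp_id_gaussianReal (μ := m₁) (v := v₁) 2)
      (memLp_id_gaussianReal (μ := m₂) (v := v₂) 2)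

theorem W2sq_gaussian_general (m₁ m₂ : ℝ) (s₁ s₂ : ℝ≥0) :
    W2sqReal (gaussianReal m₁ (s₁ ^ 2)) (gaussianReal m₂ (s₂ ^ 2)) =
      ENNReal.ofReal ((m₁ - m₂) ^ 2 + ((s₁ : ℝ) - (s₂ : ℝ)) ^ 2) := by
  rw [W2sqReal_gaussianReal, NNReal.coe_pow, NNReal.coe_pow, Real.sqrt_sq s₁.coe_nonneg,
    Real.sqrt_sq s₂.coe_nonneg]

/-- For univariate Gaussians `N(m₁, s₁²)` and `N(m₂, s₂²)` with `s₁, s₂ > 0`, the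
squared 2-Wasserstein distance equals `(m₁ − m₂)² + (s₁ − s₂)²`. -/
theorem W2sq_gaussian (m₁ m₂ : ℝ) (s₁ s₂ : ℝ≥0) (hs₁ : 0 < s₁) (hs₂ : 0 < s₂) :
    W2sqReal (gaussianReal m₁ (s₁ ^ 2)) (gaussianReal m₂ (s₂ ^ 2)) =
      ENNReal.ofReal ((m₁ - m₂) ^ 2 + ((s₁ : ℝ) - (s₂ : ℝ)) ^ 2) :=
  W2sq_gaussian_general m₁ m₂ s₁ s₂
end
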